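/- arXiv:1905.08122 — 2 statements merged into one kernel-verified Lean document; each statement's English description precedes it below -/
import Mathlib

section
/- Under the same hypotheses (K a C¹ kernel with bounded value and derivative, f bounded nonnegative integrable on [0,T], equal mesh δ = T/n, fixed h > 0), the squared-kernel sum satisfies δ⁻¹ ∑_{i=1}^n K_h²(t_{i-1} − τ) (∫_{t_{i-1}}^{t_i} f(s) ds)² → ∫_0^T K_h²(s − τ) f(s)² ds uniformly over τ ∈ [0,T] as δ → 0, provided f satisfies the local regularity condition δ ∑_{i=1}^n |f(s_i) − f(t_i)| = o(1) for any sequences (i−1)δ ≤ s_i ≤ t_i ≤ iδ. -/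
set_option autoImplicit false
open MeasureTheory Filter

lemma interval_est
    (h K0 K1 C : ℝ) (hh : 0 < h) (hK0 : 0 ≤ K0) (hK1 : 0 ≤ K1) (hC : 0 ≤ C)
    (K : ℝ → ℝ)
    (hKbd : ∀ x : ℝ, |K x| ≤ K0)
    (hKlip : ∀ u v : ℝ, |K u - K v| ≤ K1 * |u - v|)
    (f : ℝ → ℝ) (a b τ : ℝ) (hab : a < b)
    (hf0 : ∀ s ∈ Set.Icc a b, 0 ≤ f s) (hfC : ∀ s ∈ Set.Icc a b, f s ≤ C)
    (hfi : IntervalIntegrable f volume a b)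
    (hf2i : IntervalIntegrable (fun s => f s ^ 2) volume a b)
    (hgi : IntervalIntegrable (fun s => (K ((s - τ)/h)/h)^2 * f s ^ 2) volume a b) :
    |(b - a)⁻¹ * ((K ((a - τ)/h)/h)^2 * (∫ x in a..b, f x)^2)
      - ∫ x in a..b, (K ((x - τ)/h)/h)^2 * f x ^ 2|
    ≤ (K0/h)^2 * C * ((sSup (f '' Set.Icc a b) - sInf (f '' Set.Icc a b)) * (b-a))
      + (2*K0*K1/h^3) * C^2 * (b-a)^2 := by
  have hδ : 0 < b - a := sub_pos.mpr hab
  set φ : ℝ → ℝ := fun x => (K ((x - τ)/h)/h)^2 with hφdef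
  have hφbd : ∀ x : ℝ, |φ x| ≤ (K0/h)^2 := by
    intro x
    have h1 : |K ((x - τ)/h) / h| ≤ K0 / h := by
      rw [abs_div, abs_of_pos hh]
      gcongr
      exact hKbd _
    calc |φ x| = |K ((x - τ)/h)/h| ^ 2 := by rw [hφdef]; simp [abs_pow, sq_abs]
      _ ≤ (K0/h)^2 := pow_le_pow_left₀ (abs_nonneg _) h1 2
  have hφlip : ∀ x y : ℝ, |φ x - φ y| ≤ (2*K0*K1/h^3) * |x - y| := by
    intro x y
    set u := (x - τ)/h
    set v := (y - τ)/h
    have huv : u - v = (x - y)/h := by rw [div_sub_div_same]; ring_nf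
    have h1 : |φ x - φ y| = |K u - K v| * |K u + K v| / h^2 := by
      rw [hφdef]
      simp only [div_pow]
      rw [div_sub_div_same, abs_div, abs_of_pos (by positivity : (0:ℝ) < h^2), ← abs_mul]
      congr 2
      ring
    rw [h1]
    have h2 : |K u - K v| ≤ K1 * (|x - y| / h) := by
      have := hKlip u v
      rwa [huv, abs_div, abs_of_pos hh] at this
    have h3 : |K u + K v| ≤ 2 * K0 := by
      calc |K u + K v| ≤ |K u| + |K v| := abs_add_le _ _
        _ ≤ 2 * K0 := by linarith [hKbd u, hKbd v]
    calc |K u - K v| * |K u + K v| / h^2 ≤ (K1 * (|x - y| / h)) * (2*K0) / h^2 := by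
          gcongr <;> positivity
      _ = (2*K0*K1/h^3) * |x - y| := by field_simp
  -- sup/inf
  have hne : (f '' Set.Icc a b).Nonempty := ⟨f a, a, ⟨le_rfl, hab.le⟩, rfl⟩
  have hbda : BddAbove (f '' Set.Icc a b) := ⟨C, by rintro _ ⟨x, hx, rfl⟩; exact hfC x hx⟩
  have hbdb : BddBelow (f '' Set.Icc a b) := ⟨0, by rintro _ ⟨x, hx, rfl⟩; exact hf0 x hx⟩
  set M := sSup (f '' Set.Icc a b) with hM
  set m := sInf (f '' Set.Icc a b) with hm
  have hmem : ∀ s ∈ Set.Icc a b, m ≤ f s ∧ f s ≤ M := fun s hs =>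
    ⟨csInf_le hbdb ⟨s, hs, rfl⟩, le_csSup hbda ⟨s, hs, rfl⟩⟩
  have haI : a ∈ Set.Icc a b := ⟨le_rfl, hab.le⟩
  have hmM : m ≤ M := (hmem a haI).1.trans (hmem a haI).2
  set J := (∫ x in a..b, f x) with hJ
  set F2 := (∫ x in a..b, f x ^ 2) with hF2
  set G := (∫ x in a..b, φ x * f x ^ 2) with hG
  have hJle : J ≤ M * (b - a) := by
    have := intervalIntegral.integral_mono_on (μ := volume) hab.le hfi
      intervalIntegrable_const (g := fun _ => M) (fun x hx => (hmem x hx).2)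
    simpa [intervalIntegral.integral_const, smul_eq_mul, mul_comm] using this
  have hJge : m * (b - a) ≤ J := by
    have := intervalIntegral.integral_mono_on (μ := volume) hab.le
      intervalIntegrable_const hfi (f := fun _ => m) (fun x hx => (hmem x hx).1)
    simpa [intervalIntegral.integral_const, smul_eq_mul, mul_comm] using this
  set c := (b - a)⁻¹ * J with hc
  have hc1 : m ≤ c := by rw [hc, inv_mul_eq_div, le_div_iff₀ hδ]; linarith
  have hc2 : c ≤ M := by rw [hc, inv_mul_eq_div, div_le_iff₀ hδ]; linarith
  -- part 1
  have heq1 : (b - a)⁻¹ * J^2 - F2 = ∫ x in a..b, f x * (c - f x) := by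
    have e1 : (∫ x in a..b, f x * (c - f x)) = ∫ x in a..b, (c * f x - f x^2) := by
      congr 1; ext x; ring
    rw [e1, intervalIntegral.integral_sub (hfi.const_mul c) hf2i,
      intervalIntegral.integral_const_mul, hc, ← hJ, ← hF2]
    ring
  have hbd1 : |(b - a)⁻¹ * J^2 - F2| ≤ C * (M - m) * (b - a) := by
    rw [heq1, ← Real.norm_eq_abs]
    have := intervalIntegral.norm_integral_le_of_norm_le_const (C := C * (M - m))
      (f := fun x => f x * (c - f x)) (a := a) (b := b) ?_
    · rwa [abs_of_pos hδ] at this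
    · intro x hx
      rw [Set.uIoc_of_le hab.le] at hx
      have hxI : x ∈ Set.Icc a b := ⟨hx.1.le, hx.2⟩
      rw [Real.norm_eq_abs, abs_mul]
      have h1 : |f x| ≤ C := by rw [abs_of_nonneg (hf0 x hxI)]; exact hfC x hxI
      have h2 : |c - f x| ≤ M - m := by
        rw [abs_le]
        exact ⟨by linarith [(hmem x hxI).2], by linarith [(hmem x hxI).1]⟩
      exact mul_le_mul h1 h2 (abs_nonneg _) hC
  -- part 2
  have heq2 : φ a * F2 - G = ∫ x in a..b, (φ a - φ x) * f x ^ 2 := by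
    have e1 : (∫ x in a..b, (φ a - φ x) * f x^2)
        = ∫ x in a..b, (φ a * f x^2 - φ x * f x^2) := by congr 1; ext x; ring
    rw [e1, intervalIntegral.integral_sub (hf2i.const_mul _) hgi,
      intervalIntegral.integral_const_mul, hF2, hG]
  have hbd2 : |φ a * F2 - G| ≤ ((2*K0*K1/h^3) * (b-a)) * C^2 * (b - a) := by
    rw [heq2, ← Real.norm_eq_abs]
    have := intervalIntegral.norm_integral_le_of_norm_le_const
      (C := ((2*K0*K1/h^3) * (b-a)) * C^2)
      (f := fun x => (φ a - φ x) * f x ^ 2) (a := a) (b := b) ?_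
    · rwa [abs_of_pos hδ] at this
    · intro x hx
      rw [Set.uIoc_of_le hab.le] at hx
      have hxI : x ∈ Set.Icc a b := ⟨hx.1.le, hx.2⟩
      rw [Real.norm_eq_abs, abs_mul]
      have h1 : |φ a - φ x| ≤ (2*K0*K1/h^3) * (b - a) := by
        refine (hφlip a x).trans ?_
        have : |a - x| ≤ b - a := by
          rw [abs_sub_comm, abs_of_nonneg (by linarith [hx.1.le] : 0 ≤ x - a)]
          linarith [hx.2]
        gcongr
      have h2 : |f x ^ 2| ≤ C^2 := by
        rw [abs_of_nonneg (by positivity)]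
        gcongr
        · exact hf0 x hxI
        · exact hfC x hxI
      exact mul_le_mul h1 h2 (abs_nonneg _) (by positivity)
  -- combine
  have hsplit : (b - a)⁻¹ * (φ a * J^2) - G
      = φ a * ((b - a)⁻¹ * J^2 - F2) + (φ a * F2 - G) := by ring
  calc |(b - a)⁻¹ * (φ a * J^2) - G|
      = |φ a * ((b - a)⁻¹ * J^2 - F2) + (φ a * F2 - G)| := by rw [hsplit]
    _ ≤ |φ a| * |(b - a)⁻¹ * J^2 - F2| + |φ a * F2 - G| := by
        refine (abs_add_le _ _).trans ?_
        rw [abs_mul]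
    _ ≤ (K0/h)^2 * (C * (M - m) * (b - a)) + ((2*K0*K1/h^3) * (b-a)) * C^2 * (b - a) :=
        add_le_add (mul_le_mul (hφbd a) hbd1 (abs_nonneg _) (by positivity)) hbd2
    _ = (K0/h)^2 * C * ((M - m) * (b-a)) + (2*K0*K1/h^3) * C^2 * (b-a)^2 := by ring

/-- For a C¹ kernel `K` with bounded value and derivative, fixed `h > 0`, and a
bounded nonnegative integrable `f` on `[0,T]` satisfying the local regularity condition of
Assumption 2 (δ ∑ |f(s_i) − f(t_i)| = o(1) for any admissible sample sequences), the
squared-kernel sums `δ⁻¹ ∑ K_h²(t_{i-1} − τ)(∫_{t_{i-1}}^{t_i} f)²` converge to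
`∫_0^T K_h²(s − τ) f(s)² ds` uniformly over `τ ∈ [0,T]` as `δ = T/n → 0`. -/
theorem stmt_1
    (T h K0 K1 : ℝ) (hT : 0 < T) (hh : 0 < h)
    (K : ℝ → ℝ) (hK : ContDiff ℝ 1 K)
    (hKbd : ∀ x : ℝ, |K x| ≤ K0)
    (hK'bd : ∀ x : ℝ, |deriv K x| ≤ K1)
    (f : ℝ → ℝ)
    (hf_nonneg : ∀ s ∈ Set.Icc (0:ℝ) T, 0 ≤ f s)
    (hf_int : IntegrableOn f (Set.Icc (0:ℝ) T))
    (hf_bdd : ∃ C : ℝ, ∀ s ∈ Set.Icc (0:ℝ) T, f s ≤ C)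
    (hreg : ∀ s t : ℕ → ℕ → ℝ,
      (∀ n : ℕ, 0 < n → ∀ i < n, (i : ℝ) * (T / n) ≤ s n i ∧ s n i ≤ t n i ∧
          t n i ≤ ((i : ℝ) + 1) * (T / n)) →
      Tendsto (fun n : ℕ => (T / n) * ∑ i ∈ Finset.range n, |f (s n i) - f (t n i)|)
        atTop (nhds 0)) :
    TendstoUniformlyOn
      (fun (n : ℕ) (τ : ℝ) =>
        (T / n)⁻¹ * ∑ i ∈ Finset.range n,
          (K (((i : ℝ) * (T / n) - τ) / h) / h) ^ 2 *
            (∫ x in ((i : ℝ) * (T / n))..(((i : ℝ) + 1) * (T / n)), f x) ^ 2)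
      (fun τ : ℝ => ∫ s in Set.Icc (0:ℝ) T, (K ((s - τ) / h) / h) ^ 2 * f s ^ 2)
      atTop (Set.Icc (0:ℝ) T) := by
  classical
  obtain ⟨C, hC⟩ := hf_bdd
  have h0T : (0:ℝ) ∈ Set.Icc (0:ℝ) T := ⟨le_rfl, hT.le⟩
  have hC0 : 0 ≤ C := le_trans (hf_nonneg 0 h0T) (hC 0 h0T)
  have hK0 : 0 ≤ K0 := (abs_nonneg _).trans (hKbd 0)
  have hK1 : 0 ≤ K1 := (abs_nonneg _).trans (hK'bd 0)
  -- Lipschitz bound for K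
  have hKlip : ∀ u v : ℝ, |K u - K v| ≤ K1 * |u - v| := by
    intro u v
    have hdiff : Differentiable ℝ K := hK.differentiable one_ne_zero
    have h1 : LipschitzWith (Real.toNNReal K1) K := by
      apply lipschitzWith_of_nnnorm_deriv_le hdiff
      intro x
      rw [← NNReal.coe_le_coe, coe_nnnorm, Real.norm_eq_abs, Real.coe_toNNReal _ hK1]
      exact hK'bd x
    have := h1.dist_le_mul u v
    rwa [Real.dist_eq, Real.dist_eq, Real.coe_toNNReal _ hK1] at this
  -- integrability of f² and of the products
  have hfmeas : AEStronglyMeasurable f (volume.restrict (Set.Icc (0:ℝ) T)) :=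
    hf_int.aestronglyMeasurable
  have hf2meas : AEStronglyMeasurable (fun s => f s ^ 2) (volume.restrict (Set.Icc (0:ℝ) T)) := by
    have := hfmeas.mul hfmeas
    refine this.congr ?_
    filter_upwards with x
    simp [Pi.mul_apply, sq]
  have hf2_int : IntegrableOn (fun s => f s ^ 2) (Set.Icc (0:ℝ) T) := by
    refine Integrable.mono' (hf_int.const_mul C) hf2meas ?_
    rw [ae_restrict_iff' measurableSet_Icc]
    filter_upwards with s hs
    rw [Real.norm_eq_abs, abs_of_nonneg (by positivity)]
    have h1 := hf_nonneg s hs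
    have h2 := hC s hs
    nlinarith
  have hφcont : ∀ τ : ℝ, Continuous (fun x => (K ((x - τ)/h)/h)^2 : ℝ → ℝ) := by
    intro τ
    exact ((hK.continuous.comp (((continuous_id.sub continuous_const)).div_const h)).div_const h).pow 2
  have hφbd : ∀ x τ : ℝ, ‖(K ((x - τ)/h)/h)^2‖ ≤ (K0/h)^2 := by
    intro x τ
    have h1 : |K ((x - τ)/h) / h| ≤ K0 / h := by
      rw [abs_div, abs_of_pos hh]; gcongr; exact hKbd _
    rw [Real.norm_eq_abs]
    calc |(K ((x - τ)/h)/h)^2| = |K ((x - τ)/h)/h| ^ 2 := by simp [abs_pow]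
      _ ≤ (K0/h)^2 := pow_le_pow_left₀ (abs_nonneg _) h1 2
  have hg_int : ∀ τ : ℝ, IntegrableOn (fun s => (K ((s - τ)/h)/h)^2 * f s ^ 2) (Set.Icc (0:ℝ) T) :=
    fun τ => hf2_int.bdd_mul ((hφcont τ).aestronglyMeasurable) (c := (K0/h)^2) (Filter.Eventually.of_forall fun x => hφbd x τ)
  -- subinterval facts
  have hδpos : ∀ n : ℕ, 0 < n → (0:ℝ) < T / n := by
    intro n hn
    have : (0:ℝ) < n := by exact_mod_cast hn
    positivity
  have hsub : ∀ n : ℕ, 0 < n → ∀ i : ℕ, i < n →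
      Set.Icc ((i:ℝ)*(T/n)) (((i:ℝ)+1)*(T/n)) ⊆ Set.Icc (0:ℝ) T := by
    intro n hn i hi
    have hδ := hδpos n hn
    have hn' : (0:ℝ) < n := by exact_mod_cast hn
    apply Set.Icc_subset_Icc
    · positivity
    · have h1 : (i:ℝ) + 1 ≤ n := by exact_mod_cast Nat.succ_le_of_lt hi
      calc ((i:ℝ)+1)*(T/n) ≤ (n:ℝ)*(T/n) := by gcongr
        _ = T := by field_simp
  have hII : ∀ (F : ℝ → ℝ), IntegrableOn F (Set.Icc (0:ℝ) T) → ∀ n : ℕ, 0 < n → ∀ i : ℕ, i < n →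
      IntervalIntegrable F volume ((i:ℝ)*(T/n)) (((i:ℝ)+1)*(T/n)) := by
    intro F hF n hn i hi
    have hδ := hδpos n hn
    have hab : (i:ℝ)*(T/n) ≤ ((i:ℝ)+1)*(T/n) := by
      apply mul_le_mul_of_nonneg_right (by linarith) hδ.le
    have h1 : IntegrableOn F (Set.Icc ((i:ℝ)*(T/n)) (((i:ℝ)+1)*(T/n))) :=
      hF.mono_set (hsub n hn i hi)
    rw [← Set.uIcc_of_le hab] at h1
    exact h1.intervalIntegrable
  -- the target integral as a sum of interval integrals
  have hIsum : ∀ n : ℕ, 0 < n → ∀ τ : ℝ,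
      (∫ s in Set.Icc (0:ℝ) T, (K ((s - τ)/h)/h)^2 * f s ^ 2)
        = ∑ i ∈ Finset.range n,
            ∫ x in ((i:ℝ)*(T/n))..(((i:ℝ)+1)*(T/n)), (K ((x - τ)/h)/h)^2 * f x ^ 2 := by
    intro n hn τ
    have hint : ∀ k : ℕ, k < n → IntervalIntegrable
        (fun x => (K ((x - τ)/h)/h)^2 * f x ^ 2) volume
        ((fun k : ℕ => (k:ℝ)*(T/n)) k) ((fun k : ℕ => (k:ℝ)*(T/n)) (k+1)) := by
      intro k hk
      have := hII _ (hg_int τ) n hn k hk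
      simpa [Nat.cast_add, Nat.cast_one] using this
    have hsumeq := intervalIntegral.sum_integral_adjacent_intervals (μ := volume)
      (a := fun k : ℕ => (k:ℝ)*(T/n)) (n := n) hint
    have he0 : ((0:ℕ):ℝ)*(T/n) = 0 := by norm_num
    have hen : ((n:ℕ):ℝ)*(T/n) = T := by
      have hn' : ((n:ℕ):ℝ) ≠ 0 := by exact_mod_cast hn.ne'
      field_simp
    simp only [he0, hen] at hsumeq
    rw [MeasureTheory.integral_Icc_eq_integral_Ioc, ← intervalIntegral.integral_of_le hT.le,
      ← hsumeq]
    apply Finset.sum_congr rfl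
    intro i _
    congr 1
    push_cast
    ring
  -- oscillation
  set osc : ℕ → ℕ → ℝ := fun n i =>
    sSup (f '' Set.Icc ((i:ℝ)*(T/n)) (((i:ℝ)+1)*(T/n)))
      - sInf (f '' Set.Icc ((i:ℝ)*(T/n)) (((i:ℝ)+1)*(T/n))) with hoscdef
  have hoscnn : ∀ n : ℕ, 0 < n → ∀ i : ℕ, i < n → 0 ≤ osc n i := by
    intro n hn i hi
    have hδ := hδpos n hn
    have hab : (i:ℝ)*(T/n) ≤ ((i:ℝ)+1)*(T/n) :=
      mul_le_mul_of_nonneg_right (by linarith) hδ.le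
    have hmem : ((i:ℝ)*(T/n)) ∈ Set.Icc ((i:ℝ)*(T/n)) (((i:ℝ)+1)*(T/n)) := ⟨le_rfl, hab⟩
    have hne : (f '' Set.Icc ((i:ℝ)*(T/n)) (((i:ℝ)+1)*(T/n))).Nonempty := ⟨_, _, hmem, rfl⟩
    have hbda : BddAbove (f '' Set.Icc ((i:ℝ)*(T/n)) (((i:ℝ)+1)*(T/n))) :=
      ⟨C, by rintro _ ⟨x, hx, rfl⟩; exact hC x (hsub n hn i hi hx)⟩
    have hbdb : BddBelow (f '' Set.Icc ((i:ℝ)*(T/n)) (((i:ℝ)+1)*(T/n))) :=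
      ⟨0, by rintro _ ⟨x, hx, rfl⟩; exact hf_nonneg x (hsub n hn i hi hx)⟩
    have h1 := csInf_le hbdb ⟨_, hmem, rfl⟩
    have h2 := le_csSup hbda ⟨_, hmem, rfl⟩
    rw [hoscdef]
    dsimp only
    linarith
  -- nearly optimal sample points
  have hex : ∀ n : ℕ, 0 < n → ∀ i : ℕ, i < n → ∃ p : ℝ × ℝ,
      ((i:ℝ)*(T/n) ≤ p.1 ∧ p.1 ≤ p.2 ∧ p.2 ≤ ((i:ℝ)+1)*(T/n)) ∧
      osc n i ≤ |f p.1 - f p.2| + 2/n := by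
    intro n hn i hi
    have hδ := hδpos n hn
    have hn' : (0:ℝ) < n := by exact_mod_cast hn
    have hab : (i:ℝ)*(T/n) ≤ ((i:ℝ)+1)*(T/n) :=
      mul_le_mul_of_nonneg_right (by linarith) hδ.le
    set a := (i:ℝ)*(T/n)
    set b := ((i:ℝ)+1)*(T/n)
    have hmem : a ∈ Set.Icc a b := ⟨le_rfl, hab⟩
    have hne : (f '' Set.Icc a b).Nonempty := ⟨_, _, hmem, rfl⟩
    have h1n : (0:ℝ) < 1/n := by positivity
    obtain ⟨_, ⟨x, hx, rfl⟩, hxgt⟩ := exists_lt_of_lt_csSup hne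
      (show sSup (f '' Set.Icc a b) - 1/n < sSup (f '' Set.Icc a b) by linarith)
    obtain ⟨_, ⟨y, hy, rfl⟩, hylt⟩ := exists_lt_of_csInf_lt hne
      (show sInf (f '' Set.Icc a b) < sInf (f '' Set.Icc a b) + 1/n by linarith)
    have h2n : (2:ℝ)/n = 1/n + 1/n := by ring
    by_cases hxy : x ≤ y
    · refine ⟨(x, y), ⟨hx.1, hxy, hy.2⟩, ?_⟩
      have := le_abs_self (f x - f y)
      rw [hoscdef]
      dsimp only
      linarith
    · refine ⟨(y, x), ⟨hy.1, le_of_not_ge hxy, hx.2⟩, ?_⟩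
      have h3 := le_abs_self (f x - f y)
      have h4 : |f y - f x| = |f x - f y| := abs_sub_comm _ _
      rw [hoscdef]
      dsimp only
      linarith
  choose! p hp1 hp2 using hex
  have hSosc : Tendsto (fun n : ℕ => (T/n) * ∑ i ∈ Finset.range n, osc n i) atTop (nhds 0) := by
    have hconstr : ∀ n : ℕ, 0 < n → ∀ i < n, (i:ℝ)*(T/n) ≤ (fun n i => (p n i).1) n i ∧
        (fun n i => (p n i).1) n i ≤ (fun n i => (p n i).2) n i ∧
        (fun n i => (p n i).2) n i ≤ ((i:ℝ)+1)*(T/n) := by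
      intro n hn i hi
      exact hp1 n hn i hi
    have hR := hreg (fun n i => (p n i).1) (fun n i => (p n i).2) hconstr
    have hupper0 : Tendsto (fun n : ℕ =>
        (T/n) * ∑ i ∈ Finset.range n, |f (p n i).1 - f (p n i).2| + 2*T/n) atTop (nhds 0) := by
      have h2 : Tendsto (fun n : ℕ => 2*T/(n:ℝ)) atTop (nhds 0) :=
        tendsto_const_div_atTop_nhds_zero_nat (2*T)
      simpa using hR.add h2
    refine tendsto_of_tendsto_of_tendsto_of_le_of_le' tendsto_const_nhds hupper0 ?_ ?_
    · filter_upwards [eventually_ge_atTop 1] with n hn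
      have hn0 : 0 < n := hn
      have hδ := hδpos n hn0
      exact mul_nonneg hδ.le (Finset.sum_nonneg fun i hi =>
        hoscnn n hn0 i (Finset.mem_range.mp hi))
    · filter_upwards [eventually_ge_atTop 1] with n hn
      have hn0 : 0 < n := hn
      have hδ := hδpos n hn0
      have hn' : ((n:ℕ):ℝ) ≠ 0 := by
        have : (0:ℝ) < n := by exact_mod_cast hn0
        exact this.ne'
      have hstep : ∑ i ∈ Finset.range n, osc n i
          ≤ ∑ i ∈ Finset.range n, (|f (p n i).1 - f (p n i).2| + 2/n) := by
        apply Finset.sum_le_sum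
        intro i hi
        exact hp2 n hn0 i (Finset.mem_range.mp hi)
      have hsum2 : ∑ i ∈ Finset.range n, (|f (p n i).1 - f (p n i).2| + 2/n)
          = (∑ i ∈ Finset.range n, |f (p n i).1 - f (p n i).2|) + n * (2/n) := by
        rw [Finset.sum_add_distrib, Finset.sum_const, Finset.card_range, nsmul_eq_mul]
      have hδn : (T/n) * ((n:ℝ) * (2/n)) = 2*T/n := by field_simp
      calc (T/n) * ∑ i ∈ Finset.range n, osc n i
          ≤ (T/n) * ((∑ i ∈ Finset.range n, |f (p n i).1 - f (p n i).2|) + (n:ℝ) * (2/n)) := by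
            rw [← hsum2]
            exact mul_le_mul_of_nonneg_left hstep hδ.le
        _ = (T/n) * ∑ i ∈ Finset.range n, |f (p n i).1 - f (p n i).2| + 2*T/n := by
            rw [mul_add, hδn]
  -- uniform bound
  have hbound : ∀ n : ℕ, 0 < n → ∀ τ ∈ Set.Icc (0:ℝ) T,
      |(T/n)⁻¹ * ∑ i ∈ Finset.range n,
          (K (((i:ℝ)*(T/n) - τ)/h)/h)^2 *
            (∫ x in ((i:ℝ)*(T/n))..(((i:ℝ)+1)*(T/n)), f x)^2
        - ∫ s in Set.Icc (0:ℝ) T, (K ((s - τ)/h)/h)^2 * f s ^ 2|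
      ≤ (K0/h)^2*C*((T/n) * ∑ i ∈ Finset.range n, osc n i) + (2*K0*K1/h^3)*C^2*T*(T/n) := by
    intro n hn τ _
    have hδ := hδpos n hn
    have hnδ : (n:ℝ)*(T/n) = T := by
      have hn' : ((n:ℕ):ℝ) ≠ 0 := by
        have : (0:ℝ) < n := by exact_mod_cast hn
        exact this.ne'
      field_simp
    rw [hIsum n hn τ, Finset.mul_sum, ← Finset.sum_sub_distrib]
    have hper : ∀ i ∈ Finset.range n,
        |(T/n)⁻¹ * ((K (((i:ℝ)*(T/n) - τ)/h)/h)^2 *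
            (∫ x in ((i:ℝ)*(T/n))..(((i:ℝ)+1)*(T/n)), f x)^2)
          - ∫ x in ((i:ℝ)*(T/n))..(((i:ℝ)+1)*(T/n)), (K ((x - τ)/h)/h)^2 * f x ^ 2|
        ≤ (K0/h)^2*C*(osc n i*(T/n)) + (2*K0*K1/h^3)*C^2*(T/n)^2 := by
      intro i hi
      have hi' := Finset.mem_range.mp hi
      have hab : (i:ℝ)*(T/n) < ((i:ℝ)+1)*(T/n) :=
        mul_lt_mul_of_pos_right (lt_add_one _) hδ
      have hest := interval_est h K0 K1 C hh hK0 hK1 hC0 K hKbd hKlip f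
        ((i:ℝ)*(T/n)) (((i:ℝ)+1)*(T/n)) τ hab
        (fun s hs => hf_nonneg s (hsub n hn i hi' hs))
        (fun s hs => hC s (hsub n hn i hi' hs))
        (hII f hf_int n hn i hi')
        (hII _ hf2_int n hn i hi')
        (hII _ (hg_int τ) n hn i hi')
      have hba : ((i:ℝ)+1)*(T/n) - (i:ℝ)*(T/n) = T/n := by ring
      have hoscr : sSup (f '' Set.Icc ((i:ℝ)*(T/n)) (((i:ℝ)+1)*(T/n)))
          - sInf (f '' Set.Icc ((i:ℝ)*(T/n)) (((i:ℝ)+1)*(T/n))) = osc n i := rfl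
      rw [hba, hoscr] at hest
      exact hest
    refine (Finset.abs_sum_le_sum_abs _ _).trans ((Finset.sum_le_sum hper).trans_eq ?_)
    rw [Finset.sum_add_distrib, Finset.sum_const, Finset.card_range, nsmul_eq_mul,
      ← Finset.mul_sum, ← Finset.sum_mul]
    linear_combination ((2*K0*K1/h^3)*C^2*(T/n)) * hnδ
  -- conclusion
  have hδ0 : Tendsto (fun n : ℕ => T/(n:ℝ)) atTop (nhds 0) :=
    tendsto_const_div_atTop_nhds_zero_nat T
  have hB : Tendsto (fun n : ℕ =>
      (K0/h)^2*C*((T/n) * ∑ i ∈ Finset.range n, osc n i) + (2*K0*K1/h^3)*C^2*T*(T/n))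
      atTop (nhds 0) := by
    have h1 := hSosc.const_mul ((K0/h)^2*C)
    have h2 := hδ0.const_mul ((2*K0*K1/h^3)*C^2*T)
    simpa using h1.add h2
  rw [Metric.tendstoUniformlyOn_iff]
  intro ε hε
  filter_upwards [hB.eventually_lt_const hε, eventually_ge_atTop 1] with n h1 h2
  intro τ hτ
  rw [Real.dist_eq]
  calc |(∫ s in Set.Icc (0:ℝ) T, (K ((s - τ)/h)/h)^2 * f s ^ 2)
        - (T/n)⁻¹ * ∑ i ∈ Finset.range n,
            (K (((i:ℝ)*(T/n) - τ)/h)/h)^2 *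
              (∫ x in ((i:ℝ)*(T/n))..(((i:ℝ)+1)*(T/n)), f x)^2|
      = |(T/n)⁻¹ * ∑ i ∈ Finset.range n,
            (K (((i:ℝ)*(T/n) - τ)/h)/h)^2 *
              (∫ x in ((i:ℝ)*(T/n))..(((i:ℝ)+1)*(T/n)), f x)^2
          - ∫ s in Set.Icc (0:ℝ) T, (K ((s - τ)/h)/h)^2 * f s ^ 2| := abs_sub_comm _ _
    _ ≤ (K0/h)^2*C*((T/n) * ∑ i ∈ Finset.range n, osc n i) + (2*K0*K1/h^3)*C^2*T*(T/n) :=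
        hbound n h2 τ hτ
    _ < ε := h1
end

section
/- Let f : [0,T] → ℝ satisfy, for all sequences (i−1)δ ≤ s_i ≤ t_i ≤ iδ, δ ∑_{i=1}^n |f(s_i) − f(t_i)| → 0 as δ = T/n → 0 (Assumption 2 regularity), and suppose f is bounded. Then for any continuous g : [0,T] → ℝ, δ ∑_{i=1}^n g(t_{i-1}) f(ξ_i) → ∫_0^T g(s) f(s) ds as δ → 0, for any choice of sample points ξ_i ∈ [t_{i-1}, t_i]. -/
set_option autoImplicit false
open MeasureTheory Filter

set_option maxHeartbeats 1000000

/-- Riemann-sum convergence under Assumption-2 regularity: let `f` be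
bounded and measurable on `[0,T]` and satisfy the local regularity condition
`δ ∑_{i<n} |f(s_i) − f(t_i)| → 0` for all admissible sample sequences.  Then for every
continuous `g` and every choice of sample points `ξ_i ∈ [t_{i-1}, t_i]` of the equidistant
partition, `δ ∑ g(t_{i-1}) f(ξ_i) → ∫_0^T g(s) f(s) ds` as `δ = T/n → 0`. -/
theorem stmt_17
    (T : ℝ) (hT : 0 < T)
    (f : ℝ → ℝ) (hfmeas : Measurable f)
    (hfbdd : ∃ C, ∀ s ∈ Set.Icc (0:ℝ) T, |f s| ≤ C)
    (hreg : ∀ s t : ℕ → ℕ → ℝ,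
      (∀ n : ℕ, 0 < n → ∀ i < n, (i : ℝ) * (T / n) ≤ s n i ∧ s n i ≤ t n i ∧
          t n i ≤ ((i : ℝ) + 1) * (T / n)) →
      Tendsto (fun n : ℕ => (T / n) * ∑ i ∈ Finset.range n, |f (s n i) - f (t n i)|)
        atTop (nhds 0))
    (g : ℝ → ℝ) (hg : Continuous g)
    (ξ : ℕ → ℕ → ℝ)
    (hξ : ∀ n : ℕ, 0 < n → ∀ i < n,
      ξ n i ∈ Set.Icc ((i : ℝ) * (T / n)) (((i : ℝ) + 1) * (T / n))) :
    Tendsto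
      (fun n : ℕ => (T / n) * ∑ i ∈ Finset.range n, g ((i : ℝ) * (T / n)) * f (ξ n i))
      atTop (nhds (∫ s in Set.Icc (0:ℝ) T, g s * f s)) := by
  obtain ⟨C₀, hC₀⟩ := hfbdd
  set C : ℝ := max C₀ 0 with hCdef
  have hC : ∀ s ∈ Set.Icc (0:ℝ) T, |f s| ≤ C := fun s hs => (hC₀ s hs).trans (le_max_left _ _)
  have hC0 : (0:ℝ) ≤ C := le_max_right _ _
  obtain ⟨G₀, hG₀⟩ := isCompact_Icc.exists_bound_of_continuousOn
    (hg.continuousOn : ContinuousOn g (Set.Icc (0:ℝ) T))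
  set G : ℝ := max G₀ 0 with hGdef
  have hG : ∀ s ∈ Set.Icc (0:ℝ) T, |g s| ≤ G := fun s hs => (hG₀ s hs).trans (le_max_left _ _)
  have hG0 : (0:ℝ) ≤ G := le_max_right _ _
  -- basic facts about the partition
  have hδpos : ∀ n : ℕ, 0 < n → 0 < T / n := fun n hn => div_pos hT (by exact_mod_cast hn)
  have hδn : ∀ n : ℕ, 0 < n → (n : ℝ) * (T / n) = T := fun n hn => by
    field_simp
  have hsub : ∀ n : ℕ, 0 < n → ∀ i < n,
      Set.Icc ((i:ℝ) * (T/n)) (((i:ℝ)+1) * (T/n)) ⊆ Set.Icc (0:ℝ) T := by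
    intro n hn i hi
    apply Set.Icc_subset_Icc
    · positivity
    · calc ((i:ℝ)+1) * (T/n) ≤ (n:ℝ) * (T/n) := by
            apply mul_le_mul_of_nonneg_right _ (hδpos n hn).le
            have : (i:ℝ) + 1 ≤ (n:ℝ) := by exact_mod_cast hi
            linarith
          _ = T := hδn n hn
  have hξmem : ∀ n : ℕ, 0 < n → ∀ i < n, ξ n i ∈ Set.Icc (0:ℝ) T :=
    fun n hn i hi => hsub n hn i hi (hξ n hn i hi)
  have hab : ∀ n : ℕ, 0 < n → ∀ i < n, (i:ℝ) * (T/n) ≤ ((i:ℝ)+1) * (T/n) := by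
    intro n hn i hi
    apply mul_le_mul_of_nonneg_right (by linarith) (hδpos n hn).le
  -- integrability of bounded measurable functions on subintervals
  have hIntOn : ∀ (h : ℝ → ℝ), Measurable h → ∀ (D : ℝ), (∀ s ∈ Set.Icc (0:ℝ) T, |h s| ≤ D) →
      ∀ n : ℕ, 0 < n → ∀ i < n,
      IntervalIntegrable h volume ((i:ℝ) * (T/n)) (((i:ℝ)+1) * (T/n)) := by
    intro h hmeas D hD n hn i hi
    rw [intervalIntegrable_iff_integrableOn_Ioc_of_le (hab n hn i hi)]
    apply Integrable.mono' (integrable_const D) hmeas.aestronglyMeasurable.restrict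
    filter_upwards [ae_restrict_mem measurableSet_Ioc] with s hs
    exact hD s (hsub n hn i hi (Set.Ioc_subset_Icc_self hs))
  -- the error sum E
    -- E n = ∑ ∫ |f (ξ n i) - f s|
  set E : ℕ → ℝ := fun n => ∑ i ∈ Finset.range n,
      ∫ s in ((i:ℝ) * (T/n))..(((i:ℝ)+1) * (T/n)), |f (ξ n i) - f s| with hEdef
  have hfd : ∀ n : ℕ, 0 < n → ∀ i < n, ∀ s ∈ Set.Icc (0:ℝ) T, |(fun s => |f (ξ n i) - f s|) s| ≤ 2*C := by
    intro n hn i hi s hs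
    have h1 := hC s hs
    have h2 := hC (ξ n i) (hξmem n hn i hi)
    rw [abs_abs]
    calc |f (ξ n i) - f s| ≤ |f (ξ n i)| + |f s| := abs_sub _ _
      _ ≤ 2*C := by linarith
  have hIntfd : ∀ n : ℕ, 0 < n → ∀ i < n,
      IntervalIntegrable (fun s => |f (ξ n i) - f s|) volume ((i:ℝ) * (T/n)) (((i:ℝ)+1) * (T/n)) :=
    fun n hn i hi => hIntOn _ ((measurable_const.sub hfmeas).abs) (2*C) (hfd n hn i hi) n hn i hi
  have hE0 : Tendsto E atTop (nhds 0) := by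
    have hEnonneg : ∀ n, 0 ≤ E n := by
      intro n
      apply Finset.sum_nonneg
      intro i hi
      exact intervalIntegral.integral_nonneg (hab n (Nat.lt_of_le_of_lt (Nat.zero_le i) (Finset.mem_range.1 hi)) i (Finset.mem_range.1 hi)) (fun u _ => abs_nonneg _)
    by_contra hcon
    rw [Metric.tendsto_atTop] at hcon
    push_neg at hcon
    obtain ⟨ε, hε, hfreq⟩ := hcon
    set η : ℝ := ε / (2*T) with hηdef
    have hη : 0 < η := by positivity
    -- sup of |f ξ - f s| over interval i
    set S : ℕ → ℕ → ℝ := fun n i =>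
      sSup ((fun s => |f (ξ n i) - f s|) '' Set.Icc ((i:ℝ) * (T/n)) (((i:ℝ)+1) * (T/n))) with hSdef
    have hbdd : ∀ n : ℕ, 0 < n → ∀ i < n,
        BddAbove ((fun s => |f (ξ n i) - f s|) '' Set.Icc ((i:ℝ) * (T/n)) (((i:ℝ)+1) * (T/n))) := by
      intro n hn i hi
      refine ⟨2*C, ?_⟩
      rintro y ⟨s, hs, rfl⟩
      have := hfd n hn i hi s (hsub n hn i hi hs)
      simpa [abs_abs] using this
    have hne : ∀ n : ℕ, 0 < n → ∀ i < n,
        ((fun s => |f (ξ n i) - f s|) '' Set.Icc ((i:ℝ) * (T/n)) (((i:ℝ)+1) * (T/n))).Nonempty := by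
      intro n hn i hi
      exact ⟨_, Set.mem_image_of_mem _ (Set.left_mem_Icc.2 (hab n hn i hi))⟩
    -- choose near-optimal points p
    have hex : ∀ n i : ℕ, ∃ p : ℝ, 0 < n → i < n →
        p ∈ Set.Icc ((i:ℝ) * (T/n)) (((i:ℝ)+1) * (T/n)) ∧ S n i - η < |f (ξ n i) - f p| := by
      intro n i
      by_cases hni : 0 < n ∧ i < n
      · obtain ⟨hn, hi⟩ := hni
        have hlt : S n i - η < S n i := sub_lt_self _ hη
        obtain ⟨y, hy, hy2⟩ := exists_lt_of_lt_csSup (hne n hn i hi) hlt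
        obtain ⟨p, hp, rfl⟩ := hy
        exact ⟨p, fun _ _ => ⟨hp, hy2⟩⟩
      · exact ⟨(i:ℝ) * (T/n), fun h1 h2 => absurd ⟨h1, h2⟩ hni⟩
    choose p hp using hex
    set s' : ℕ → ℕ → ℝ := fun n i => min (ξ n i) (p n i) with hs'def
    set t' : ℕ → ℕ → ℝ := fun n i => max (ξ n i) (p n i) with ht'def
    have hadm : ∀ n : ℕ, 0 < n → ∀ i < n, (i : ℝ) * (T / n) ≤ s' n i ∧ s' n i ≤ t' n i ∧
        t' n i ≤ ((i : ℝ) + 1) * (T / n) := by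
      intro n hn i hi
      obtain ⟨hp1, _⟩ := hp n i hn hi
      obtain ⟨hξ1, hξ2⟩ := hξ n hn i hi
      exact ⟨le_min hξ1 hp1.1, min_le_max, max_le hξ2 hp1.2⟩
    have hlim := hreg s' t' hadm
    have hev : ∀ᶠ n in atTop, (T / n) * ∑ i ∈ Finset.range n, |f (s' n i) - f (t' n i)| < ε/2 :=
      hlim.eventually_lt_const (by positivity)
    obtain ⟨N, hN⟩ := eventually_atTop.1 hev
    obtain ⟨n, hnN, hdist⟩ := hfreq (max N 1)
    have hn1 : 0 < n := lt_of_lt_of_le (Nat.lt_of_lt_of_le Nat.zero_lt_one (le_max_right N 1)) hnN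
    have hnN' : N ≤ n := le_trans (le_max_left N 1) hnN
    have hEge : ε ≤ E n := by
      have : dist (E n) 0 = E n := by rw [Real.dist_eq, sub_zero, abs_of_nonneg (hEnonneg n)]
      rwa [this] at hdist
    -- key chain: E n ≤ (T/n) * ∑ |f s' - f t'| + ε/2
    have hkey : E n ≤ (T/n) * ∑ i ∈ Finset.range n, |f (s' n i) - f (t' n i)| + ε/2 := by
      have hterm : ∀ i ∈ Finset.range n,
          (∫ s in ((i:ℝ) * (T/n))..(((i:ℝ)+1) * (T/n)), |f (ξ n i) - f s|)
            ≤ (T/n) * (|f (s' n i) - f (t' n i)| + η) := by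
        intro i hi
        have hi' := Finset.mem_range.1 hi
        have h1 : (∫ s in ((i:ℝ) * (T/n))..(((i:ℝ)+1) * (T/n)), |f (ξ n i) - f s|)
            ≤ ∫ _s in ((i:ℝ) * (T/n))..(((i:ℝ)+1) * (T/n)), S n i := by
          apply intervalIntegral.integral_mono_on (hab n hn1 i hi') (hIntfd n hn1 i hi')
            intervalIntegrable_const
          intro x hx
          exact le_csSup (hbdd n hn1 i hi') (Set.mem_image_of_mem _ hx)
        have h2 : (∫ _s in ((i:ℝ) * (T/n))..(((i:ℝ)+1) * (T/n)), S n i) = (T/n) * S n i := by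
          rw [intervalIntegral.integral_const, smul_eq_mul]
          ring_nf
        have h3 : S n i ≤ |f (s' n i) - f (t' n i)| + η := by
          obtain ⟨_, hp2⟩ := hp n i hn1 hi'
          have heq : |f (s' n i) - f (t' n i)| = |f (ξ n i) - f (p n i)| := by
            rcases le_total (ξ n i) (p n i) with h | h
            · simp [hs'def, ht'def, min_eq_left h, max_eq_right h]
            · simp [hs'def, ht'def, min_eq_right h, max_eq_left h, abs_sub_comm]
          rw [heq]
          linarith
        calc (∫ s in ((i:ℝ) * (T/n))..(((i:ℝ)+1) * (T/n)), |f (ξ n i) - f s|)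
            ≤ (T/n) * S n i := h1.trans_eq h2
          _ ≤ (T/n) * (|f (s' n i) - f (t' n i)| + η) :=
              mul_le_mul_of_nonneg_left h3 (hδpos n hn1).le
      calc E n ≤ ∑ i ∈ Finset.range n, (T/n) * (|f (s' n i) - f (t' n i)| + η) :=
            Finset.sum_le_sum hterm
        _ = (T/n) * ∑ i ∈ Finset.range n, |f (s' n i) - f (t' n i)| + (n:ℝ) * ((T/n) * η) := by
            rw [Finset.sum_congr rfl (fun i _ => mul_add (T/n) _ η), Finset.sum_add_distrib,
              Finset.mul_sum, Finset.sum_const, Finset.card_range, nsmul_eq_mul]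
        _ = (T/n) * ∑ i ∈ Finset.range n, |f (s' n i) - f (t' n i)| + ε/2 := by
            rw [← mul_assoc, hδn n hn1, hηdef]
            field_simp
    have := hN n hnN'
    linarith
  have hEnonneg : ∀ n, 0 ≤ E n := by
    intro n
    apply Finset.sum_nonneg
    intro i hi
    exact intervalIntegral.integral_nonneg
      (hab n (Nat.lt_of_le_of_lt (Nat.zero_le i) (Finset.mem_range.1 hi)) i (Finset.mem_range.1 hi))
      (fun u _ => abs_nonneg _)
  have hIntgf : ∀ n : ℕ, 0 < n → ∀ i < n,
      IntervalIntegrable (fun s => g s * f s) volume ((i:ℝ) * (T/n)) (((i:ℝ)+1) * (T/n)) := by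
    apply hIntOn _ (hg.measurable.mul hfmeas) (G*C)
    intro s hs
    rw [Pi.mul_apply, abs_mul]
    exact mul_le_mul (hG s hs) (hC s hs) (abs_nonneg _) hG0
  have hIcc : (∫ s in Set.Icc (0:ℝ) T, g s * f s) = ∫ s in (0:ℝ)..T, g s * f s := by
    rw [intervalIntegral.integral_of_le hT.le, integral_Icc_eq_integral_Ioc]
  rw [hIcc, Metric.tendsto_atTop]
  intro ε hε
  set ε₁ : ℝ := ε / (2*(C*T+1)) with hε₁def
  set ε₂ : ℝ := ε / (2*(G+1)) with hε₂def
  have hε₁ : 0 < ε₁ := by positivity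
  have hε₂ : 0 < ε₂ := by positivity
  -- uniform continuity of g on [0,T]
  have hug := isCompact_Icc.uniformContinuousOn_of_continuous
    (hg.continuousOn : ContinuousOn g (Set.Icc (0:ℝ) T))
  rw [Metric.uniformContinuousOn_iff] at hug
  obtain ⟨d, hd, hdg⟩ := hug ε₁ hε₁
  obtain ⟨N₁, hN₁⟩ := (Metric.tendsto_atTop.1 hE0) ε₂ hε₂
  have hδto : Tendsto (fun n : ℕ => T / n) atTop (nhds 0) := tendsto_const_div_atTop_nhds_zero_nat T
  obtain ⟨N₂, hN₂⟩ := eventually_atTop.1 (hδto.eventually_lt_const hd)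
  refine ⟨max (max N₁ N₂) 1, fun n hn => ?_⟩
  have hn1 : 0 < n := Nat.lt_of_lt_of_le Nat.zero_lt_one (le_trans (le_max_right _ 1) hn)
  have hnN₁ : N₁ ≤ n := le_trans (le_trans (le_max_left N₁ N₂) (le_max_left _ 1)) hn
  have hnN₂ : N₂ ≤ n := le_trans (le_trans (le_max_right N₁ N₂) (le_max_left _ 1)) hn
  have hδd : T / n < d := hN₂ n hnN₂
  have hEn : E n < ε₂ := by
    have := hN₁ n hnN₁
    rw [Real.dist_eq, sub_zero, abs_of_nonneg (hEnonneg n)] at this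
    exact this
  -- split the integral over the partition
  have hsplit : (∫ s in (0:ℝ)..T, g s * f s)
      = ∑ i ∈ Finset.range n, ∫ s in ((i:ℝ) * (T/n))..(((i:ℝ)+1) * (T/n)), g s * f s := by
    have h := intervalIntegral.sum_integral_adjacent_intervals
      (a := fun i : ℕ => (i:ℝ) * (T/n)) (μ := volume) (f := fun s => g s * f s) (n := n)
      (fun i hi => by
        convert hIntgf n hn1 i hi using 2
        push_cast
        ring)
    simp only [Nat.cast_zero, Nat.cast_add, Nat.cast_one, zero_mul] at h
    rw [hδn n hn1] at h
    rw [← h]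
  -- per-interval estimate
  have hterm : ∀ i ∈ Finset.range n,
      |(T/n) * (g ((i:ℝ) * (T/n)) * f (ξ n i))
        - ∫ s in ((i:ℝ) * (T/n))..(((i:ℝ)+1) * (T/n)), g s * f s|
      ≤ G * (∫ s in ((i:ℝ) * (T/n))..(((i:ℝ)+1) * (T/n)), |f (ξ n i) - f s|)
          + (T/n) * (ε₁ * C) := by
    intro i hi
    have hi' := Finset.mem_range.1 hi
    set a : ℝ := (i:ℝ) * (T/n) with hadef
    set b : ℝ := ((i:ℝ)+1) * (T/n) with hbdef
    have hab' : a ≤ b := hab n hn1 i hi'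
    set c : ℝ := g a * f (ξ n i) with hcdef
    have hconst : (T/n) * c = ∫ _s in a..b, c := by
      rw [intervalIntegral.integral_const, smul_eq_mul, hadef, hbdef]
      ring_nf
    have habs : ∀ s ∈ Set.Icc a b, |c - g s * f s| ≤ G * |f (ξ n i) - f s| + ε₁ * C := by
      intro s hs
      have hsT : s ∈ Set.Icc (0:ℝ) T := hsub n hn1 i hi' hs
      have haT : a ∈ Set.Icc (0:ℝ) T := hsub n hn1 i hi' (Set.left_mem_Icc.2 hab')
      have hga : |g a| ≤ G := hG a haT
      have hgd : |g a - g s| ≤ ε₁ := by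
        have hdist : dist a s < d := by
          rw [Real.dist_eq, abs_of_nonpos (by linarith [hs.1, hs.2] : a - s ≤ 0)]
          have : s - a ≤ T/n := by
            have := hs.2
            rw [hbdef] at this
            rw [hadef]
            linarith [this]
          linarith
        have := hdg a haT s hsT hdist
        rw [Real.dist_eq] at this
        exact this.le
      have hfs : |f s| ≤ C := hC s hsT
      have key : c - g s * f s = g a * (f (ξ n i) - f s) + (g a - g s) * f s := by
        rw [hcdef]; ring
      rw [key]
      calc |g a * (f (ξ n i) - f s) + (g a - g s) * f s|
          ≤ |g a * (f (ξ n i) - f s)| + |(g a - g s) * f s| := abs_add_le _ _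
        _ = |g a| * |f (ξ n i) - f s| + |g a - g s| * |f s| := by rw [abs_mul, abs_mul]
        _ ≤ G * |f (ξ n i) - f s| + ε₁ * C :=
            add_le_add (mul_le_mul_of_nonneg_right hga (abs_nonneg _))
              (mul_le_mul hgd hfs (abs_nonneg _) hε₁.le)
    have hInt1 : IntervalIntegrable (fun s => |c - g s * f s|) volume a b := by
      apply hIntOn _ ((measurable_const.sub (hg.measurable.mul hfmeas)).abs) (G*C + G*C)
      · intro s hs
        rw [abs_abs]
        have h1 : |g s * f s| ≤ G*C := by
          rw [abs_mul]; exact mul_le_mul (hG s hs) (hC s hs) (abs_nonneg _) hG0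
        have h2 : |c| ≤ G*C := by
          rw [hcdef, abs_mul]
          exact mul_le_mul (hG _ (hsub n hn1 i hi' (Set.left_mem_Icc.2 hab')))
            (hC _ (hξmem n hn1 i hi')) (abs_nonneg _) hG0
        calc |c - g s * f s| ≤ |c| + |g s * f s| := abs_sub _ _
          _ ≤ G*C + G*C := add_le_add h2 h1
      · exact hn1
      · exact hi'
    have hInt2 : IntervalIntegrable (fun s => G * |f (ξ n i) - f s| + ε₁ * C) volume a b :=
      ((hIntfd n hn1 i hi').const_mul G).add intervalIntegrable_const
    calc |(T/n) * c - ∫ s in a..b, g s * f s|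
        = |∫ s in a..b, (c - g s * f s)| := by
          rw [hconst, ← intervalIntegral.integral_sub intervalIntegrable_const (hIntgf n hn1 i hi')]
      _ ≤ ∫ s in a..b, |c - g s * f s| :=
          intervalIntegral.abs_integral_le_integral_abs hab'
      _ ≤ ∫ s in a..b, (G * |f (ξ n i) - f s| + ε₁ * C) :=
          intervalIntegral.integral_mono_on hab' hInt1 hInt2 habs
      _ = G * (∫ s in a..b, |f (ξ n i) - f s|) + (T/n) * (ε₁ * C) := by
          rw [intervalIntegral.integral_add ((hIntfd n hn1 i hi').const_mul G)
            intervalIntegrable_const,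
            intervalIntegral.integral_const_mul, intervalIntegral.integral_const, smul_eq_mul,
            hadef, hbdef]
          ring_nf
  -- assemble
  have hmain : dist ((T / n) * ∑ i ∈ Finset.range n, g ((i:ℝ) * (T/n)) * f (ξ n i))
      (∫ s in (0:ℝ)..T, g s * f s) ≤ G * E n + ε₁ * C * T := by
    rw [Real.dist_eq, hsplit, Finset.mul_sum, ← Finset.sum_sub_distrib]
    calc |∑ i ∈ Finset.range n, ((T/n) * (g ((i:ℝ) * (T/n)) * f (ξ n i))
            - ∫ s in ((i:ℝ) * (T/n))..(((i:ℝ)+1) * (T/n)), g s * f s)|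
        ≤ ∑ i ∈ Finset.range n, |(T/n) * (g ((i:ℝ) * (T/n)) * f (ξ n i))
            - ∫ s in ((i:ℝ) * (T/n))..(((i:ℝ)+1) * (T/n)), g s * f s| :=
          Finset.abs_sum_le_sum_abs _ _
      _ ≤ ∑ i ∈ Finset.range n,
            (G * (∫ s in ((i:ℝ) * (T/n))..(((i:ℝ)+1) * (T/n)), |f (ξ n i) - f s|)
              + (T/n) * (ε₁ * C)) := Finset.sum_le_sum hterm
      _ = G * E n + (n:ℝ) * ((T/n) * (ε₁ * C)) := by
          rw [Finset.sum_add_distrib, ← Finset.mul_sum, Finset.sum_const, Finset.card_range,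
            nsmul_eq_mul, hEdef]
      _ = G * E n + ε₁ * C * T := by
          rw [← mul_assoc, hδn n hn1]; ring
  have h1 : G * E n < ε/2 := by
    have : G * E n ≤ (G+1) * E n := by nlinarith [hEnonneg n]
    have h2 : (G+1) * E n < (G+1) * ε₂ := by
      apply mul_lt_mul_of_pos_left hEn (by linarith)
    have h3 : (G+1) * ε₂ = ε/2 := by
      rw [hε₂def]
      field_simp
    linarith
  have h2 : ε₁ * C * T ≤ ε/2 := by
    have : ε₁ * (C*T) ≤ ε₁ * (C*T+1) := by nlinarith
    have h3 : ε₁ * (C*T+1) = ε/2 := by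
      rw [hε₁def]
      field_simp
    nlinarith
  calc dist _ _ ≤ G * E n + ε₁ * C * T := hmain
    _ < ε := by linarith
end
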